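/- Let N be a normal subgroup of a finite group G. The number of orbits of the conjugation action of G on Irr(N) equals the number of G-conjugacy classes of elements of N (equivalently, the number of orbits of G acting on the conjugacy classes of N). -/

import Mathlib

noncomputable section
open Classical

def Gclass (G : Type) [Group G] (x : G) : Set G := {y | ∃ g : G, g * x * g⁻¹ = y}

def Nclass {G : Type} [Group G] (N : Subgroup G) (x : G) : Set G :=
  {y | ∃ n ∈ N, n * x * n⁻¹ = y}

def conjChar {G : Type} [Group G] (N : Subgroup G) [hN : N.Normal] (g : G) (θ : ↥N → ℂ) :
    ↥N → ℂ :=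
  fun x => θ ⟨g * (x : G) * g⁻¹, hN.conj_mem _ x.2 g⟩

lemma conjChar_one {G : Type} [Group G] (N : Subgroup G) [N.Normal] (θ : ↥N → ℂ) :
    conjChar N 1 θ = θ := by
  funext x; simp only [conjChar]; congr 1; ext; simp

lemma conjChar_comp {G : Type} [Group G] (N : Subgroup G) [N.Normal] (a b : G) (θ : ↥N → ℂ) :
    conjChar N a (conjChar N b θ) = conjChar N (b * a) θ := by
  funext x; simp only [conjChar]; congr 1; ext; simp; group

def IsIrrChar (H : Type) [Group H] (χ : H → ℂ) : Prop :=
  ∃ V : FDRep ℂ H, CategoryTheory.Simple V ∧ V.character = χ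

def hatChar {G : Type} [Group G] [Fintype G] (N : Subgroup G) [N.Normal] (θ : ↥N → ℂ) :
    ↥N → ℂ :=
  fun x => ∑ ψ ∈ (Set.finite_range (fun g : G => conjChar N g θ)).toFinset, ψ x

def charInner (H : Type) [Fintype H] (f g : H → ℂ) : ℂ :=
  (Fintype.card H : ℂ)⁻¹ * ∑ x, f x * (starRingEnd ℂ) (g x)

def inertia {G : Type} [Group G] (N : Subgroup G) [N.Normal] (θ : ↥N → ℂ) : Subgroup G where
  carrier := {g | conjChar N g θ = θ}
  one_mem' := conjChar_one N θ
  mul_mem' := by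
    intro a b ha hb
    have : conjChar N (a * b) θ = conjChar N b (conjChar N a θ) := (conjChar_comp N b a θ).symm
    simp only [Set.mem_setOf_eq] at *
    rw [this, ha, hb]
  inv_mem' := by
    intro a ha
    simp only [Set.mem_setOf_eq] at *
    have h2 := conjChar_comp N a⁻¹ a θ
    rw [mul_inv_cancel, conjChar_one, ha] at h2
    exact h2

def cfG {G : Type} [Group G] (N : Subgroup G) [N.Normal] : Submodule ℂ (↥N → ℂ) where
  carrier := {f | ∀ g : G, conjChar N g f = f}
  add_mem' := by
    intro a b ha hb g
    have h : conjChar N g (a + b) = conjChar N g a + conjChar N g b := rfl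
    rw [h, ha g, hb g]
  zero_mem' := fun g => rfl
  smul_mem' := by
    intro c a ha g
    have h : conjChar N g (c • a) = c • conjChar N g a := rfl
    rw [h, ha g]


open CategoryTheory MonoidAlgebra

section GeneralH
variable {H : Type} [Group H] [Fintype H]

section Bridge
variable {V : Type} [AddCommGroup V] [Module ℂ V]

def RepInvariant (ρ : Representation ℂ H V) (W : Submodule ℂ V) : Prop :=
  ∀ g : H, ∀ x ∈ W, ρ g x ∈ W

def subRepn (ρ : Representation ℂ H V) (W : Submodule ℂ V) (hW : RepInvariant ρ W) :
    Representation ℂ H ↥W where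
  toFun g := (ρ g).restrict (hW g)
  map_one' := by ext x; simp [LinearMap.restrict_apply]
  map_mul' g h := by ext x; simp [LinearMap.restrict_apply]

@[simp] lemma subRepn_apply (ρ : Representation ℂ H V) (W : Submodule ℂ V)
    (hW : RepInvariant ρ W) (g : H) (x : ↥W) :
    (subRepn ρ W hW g x : V) = ρ g (x : V) := rfl

end Bridge

lemma hom_comm {X Y : FDRep ℂ H} (f : X ⟶ Y) (g : H) (v : X) :
    f.hom (X.ρ g v) = Y.ρ g (f.hom v) :=
  congrArg (fun φ => φ.hom.hom v) (f.comm g)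

lemma simple_iff_rep (X : FDRep ℂ H) :
    Simple X ↔ (Nontrivial X ∧
      ∀ W : Submodule ℂ X, RepInvariant X.ρ W → W = ⊥ ∨ W = ⊤) := by
  constructor
  · intro hS
    have hnt : Nontrivial X := by
      by_contra hn
      rw [not_nontrivial_iff_subsingleton] at hn
      have : 𝟙 X = 0 := by
        ext v
        exact Subsingleton.elim (α := X) _ _
      exact id_nonzero X this
    refine ⟨hnt, fun W hW => ?_⟩
    by_cases hbot : W = ⊥
    · exact Or.inl hbot
    · right
      let Y : FDRep ℂ H := FDRep.of (subRepn X.ρ W hW)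
      let ι : Y ⟶ X := ⟨FGModuleCat.ofHom W.subtype, fun g => rfl⟩
      have hmono : Mono ι := by
        constructor
        intro Z g₁ g₂ hg
        ext z
        have h2 := congrArg (fun (φ : Z ⟶ X) => φ.hom z) hg
        exact h2
      have hne : ι ≠ 0 := by
        obtain ⟨w, hwW, hw0⟩ := (Submodule.ne_bot_iff W).1 hbot
        intro h0
        have : ι.hom ⟨w, hwW⟩ = (0 : Y ⟶ X).hom ⟨w, hwW⟩ := by rw [h0]
        exact hw0 this
      have hiso : IsIso ι := (hS.mono_isIso_iff_nonzero ι).2 hne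
      rw [eq_top_iff]
      intro v _
      have h1 : (inv ι ≫ ι) = 𝟙 X := IsIso.inv_hom_id ι
      have hv : ι.hom ((inv ι).hom v) = v := congrArg (fun (φ : X ⟶ X) => φ.hom v) h1
      rw [← hv]
      exact ((inv ι).hom v).2
  · rintro ⟨hnt, hs⟩
    constructor
    intro Y f hmono
    constructor
    · intro hiso h0
      obtain ⟨v, w, hvw⟩ := hnt
      apply hvw
      have h1 : inv f ≫ f = 𝟙 X := IsIso.inv_hom_id f
      have hv : ∀ u : X, f.hom ((inv f).hom u) = u := fun u =>
        congrArg (fun (φ : X ⟶ X) => φ.hom u) h1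
      have hf0 : ∀ y : Y, f.hom y = 0 := fun y =>
        congrArg (fun (φ : Y ⟶ X) => φ.hom y) h0
      calc v = f.hom ((inv f).hom v) := (hv v).symm
        _ = 0 := hf0 _
        _ = f.hom ((inv f).hom w) := (hf0 _).symm
        _ = w := hv w
    · intro hne
      have hker : RepInvariant Y.ρ (LinearMap.ker f.hom.hom.hom) := by
        intro g x hx
        have hx0 : f.hom x = 0 := hx
        show f.hom (Y.ρ g x) = 0
        have h2 : f.hom (Y.ρ g x) = X.ρ g (f.hom x) := hom_comm f g x
        rw [h2, hx0, map_zero]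
      have hinj : Function.Injective f.hom := by
        let K : FDRep ℂ H := FDRep.of (subRepn Y.ρ _ hker)
        let ι : K ⟶ Y := ⟨FGModuleCat.ofHom (LinearMap.ker f.hom.hom.hom).subtype, fun g => rfl⟩
        have hcomp : ι ≫ f = (0 : K ⟶ Y) ≫ f := by
          apply Action.Hom.ext
          apply FGModuleCat.hom_ext
          apply LinearMap.ext
          intro z
          show f.hom (ι.hom z) = f.hom ((0 : K ⟶ Y).hom z)
          have hz : f.hom (ι.hom z) = 0 := z.2
          rw [hz]
          show (0 : X) = f.hom 0
          rw [map_zero]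
        have hι : ι = 0 := (cancel_mono f).1 hcomp
        show Function.Injective f.hom.hom.hom
        rw [← LinearMap.ker_eq_bot, eq_bot_iff]
        intro y hy
        have : ι.hom ⟨y, hy⟩ = (0 : K ⟶ Y).hom ⟨y, hy⟩ := by rw [hι]
        exact (Submodule.mem_bot ℂ).2 this
      have hrange : RepInvariant X.ρ (LinearMap.range f.hom.hom.hom) := by
        rintro g x ⟨y, rfl⟩
        exact ⟨Y.ρ g y, hom_comm f g y⟩
      have hsurj : Function.Surjective f.hom := by
        rcases hs _ hrange with h | h
        · exfalso
          apply hne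
          ext y
          show f.hom y = (0 : Y ⟶ X).hom y
          have : f.hom y ∈ LinearMap.range f.hom.hom.hom := ⟨y, rfl⟩
          rw [h] at this
          exact (Submodule.mem_bot ℂ).1 this
        · intro v
          have : v ∈ LinearMap.range f.hom.hom.hom := by rw [h]; trivial
          exact this
      let e : Y ≃ₗ[ℂ] X := LinearEquiv.ofBijective f.hom.hom.hom ⟨hinj, hsurj⟩
      have he : ∀ y : Y, e y = f.hom y := fun _ => rfl
      have hcomm : ∀ (g : H) (v : X), e.symm (X.ρ g v) = Y.ρ g (e.symm v) := by
        intro g v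
        apply hinj
        show e (e.symm (X.ρ g v)) = e (Y.ρ g (e.symm v))
        rw [e.apply_symm_apply]
        have h2 : e (Y.ρ g (e.symm v)) = X.ρ g (e (e.symm v)) := hom_comm f g _
        rw [h2, e.apply_symm_apply]
      let finv : X ⟶ Y := ⟨FGModuleCat.ofHom (e.symm : X ≃ₗ[ℂ] Y).toLinearMap, fun g => FGModuleCat.hom_ext (LinearMap.ext fun v => hcomm g v)⟩
      refine ⟨finv, ?_, ?_⟩
      · ext y
        show e.symm (f.hom y) = y
        rw [← he, e.symm_apply_apply]
      · ext v
        show f.hom (e.symm v) = v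
        rw [← he, e.apply_symm_apply]

open MonoidAlgebra


/-- bilinear pairing on functions -/
def Bform (u v : H → ℂ) : ℂ := (Fintype.card H : ℂ)⁻¹ * ∑ x, u x * v x⁻¹

local notation "A" => MonoidAlgebra ℂ H

instance : FiniteDimensional ℂ A :=
  Module.Finite.equiv ((Finsupp.linearEquivFunOnFinite ℂ ℂ H).symm.trans (MonoidAlgebra.coeffLinearEquiv ℂ).symm)

instance fdS (S : Submodule A A) : FiniteDimensional ℂ ↥S :=
  inferInstanceAs (FiniteDimensional ℂ ↥(S.restrictScalars ℂ))

def cfElt (f : H → ℂ) : A := ∑ x : H, single x⁻¹ (f x)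

lemma cfElt_comm_single (f : H → ℂ) (hf : ∀ g x : H, f (g * x * g⁻¹) = f x) (h : H) :
    (single h 1 : A) * cfElt f = cfElt f * single h 1 := by
  unfold cfElt
  rw [Finset.mul_sum, Finset.sum_mul]
  rw [← Equiv.sum_comp (Equiv.mulLeft h⁻¹ |>.trans (Equiv.mulRight h))
    (fun x => (single h 1 : A) * single x⁻¹ (f x))]
  apply Finset.sum_congr rfl
  intro x _
  simp only [Equiv.trans_apply, Equiv.coe_mulLeft, Equiv.coe_mulRight]
  rw [single_mul_single, single_mul_single]
  have h1 : (h⁻¹ * x * h)⁻¹ = h⁻¹ * x⁻¹ * h := by group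
  have h2 : f (h⁻¹ * x * h) = f x := by
    have := hf h⁻¹ x; simpa using this
  rw [h1, h2]
  congr 1
  group

def subRepS (S : Submodule A A) : Representation ℂ H ↥S where
  toFun h :=
    { toFun := fun s => (single h 1 : A) • s
      map_add' := fun a b => smul_add _ a b
      map_smul' := fun c s => smul_comm _ c s }
  map_one' := LinearMap.ext fun s => by
    show (single (1:H) (1:ℂ) : A) • s = s
    rw [show (single (1:H) (1:ℂ) : A) = 1 from rfl, one_smul]
  map_mul' g h := LinearMap.ext fun s => by
    show (single (g * h) (1:ℂ) : A) • s = (single g 1 : A) • (single h 1 : A) • s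
    rw [smul_smul, single_mul_single, one_mul]

lemma subRepS_apply (S : Submodule A A) (h : H) (s : ↥S) :
    subRepS S h s = (single h 1 : A) • s := rfl

lemma simple_X (S : Submodule A A) (hS : IsSimpleModule A ↥S) :
    Simple (FDRep.of (subRepS S)) := by
  rw [simple_iff_rep]
  refine ⟨IsSimpleModule.nontrivial A ↥S, fun W₀ hW => ?_⟩
  let W : Submodule ℂ ↥S := W₀
  let W' : Submodule A ↥S :=
    { carrier := W
      add_mem' := fun ha hb => W.add_mem ha hb
      zero_mem' := W.zero_mem
      smul_mem' := by
        intro a w hw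
        refine MonoidAlgebra.induction_on (motive := fun b : A => b • w ∈ W) a ?_ ?_ ?_
        · intro g
          show (single g 1 : A) • w ∈ W
          exact hW g w hw
        · intro p q hp hq
          rw [add_smul]
          exact W.add_mem hp hq
        · intro c p hp
          rw [smul_assoc]
          exact W.smul_mem c hp }
  have hmem : ∀ x : ↥S, x ∈ W' ↔ x ∈ W := fun x => Iff.rfl
  rcases hS.toIsSimpleOrder.eq_bot_or_eq_top W' with h | h
  · show W = ⊥ ∨ W = ⊤
    left
    rw [eq_bot_iff]
    intro x hx
    have : x ∈ W' := hx
    rw [h] at this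
    simpa using this
  · right
    rw [eq_top_iff]
    intro x _
    have : x ∈ W' := by rw [h]; trivial
    exact this

lemma card_ne_zero' : ((Fintype.card H : ℂ)) ≠ 0 := by
  exact_mod_cast Nat.cast_ne_zero.2 Fintype.card_ne_zero

lemma completeness (f : H → ℂ) (hf : ∀ g x : H, f (g * x * g⁻¹) = f x)
    (h0 : ∀ χ : H → ℂ, IsIrrChar H χ → Bform f χ = 0) : f = 0 := by
  have hann : ∀ S : Submodule A A, IsSimpleModule A ↥S → ∀ s ∈ S, cfElt f * s = 0 := by
    intro S hS s hs
    haveI := simple_X S hS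
    set X := FDRep.of (subRepS S) with hX
    have hcomm : ∀ (h : H) (t : ↥S), cfElt f • (subRepS S h t) = subRepS S h (cfElt f • t) := by
      intro h t
      rw [subRepS_apply, subRepS_apply, smul_smul, smul_smul, ← cfElt_comm_single f hf h]
    let T : ↥S →ₗ[ℂ] ↥S :=
      { toFun := fun t => cfElt f • t
        map_add' := fun a b => smul_add _ a b
        map_smul' := fun c t => smul_comm _ c t }
    let τ : X ⟶ X := ⟨FGModuleCat.ofHom T, fun h => FGModuleCat.hom_ext (LinearMap.ext fun t => (hcomm h t))⟩
    have hfin : Module.finrank ℂ (X ⟶ X) = 1 := by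
      rw [FDRep.finrank_hom_simple_simple X X, if_pos ⟨Iso.refl X⟩]
    have hid : (𝟙 X : X ⟶ X) ≠ 0 := id_nonzero X
    obtain ⟨c, hc⟩ := (finrank_eq_one_iff_of_nonzero' (𝟙 X) hid).1 hfin τ
    have hT : ∀ t : ↥S, cfElt f • t = c • t := by
      intro t
      have h2 := congrArg (fun (φ : X ⟶ X) => φ.hom t) hc
      exact h2.symm
    -- trace computations
    have hchar : IsIrrChar H X.character := ⟨X, inferInstance, rfl⟩
    have hB : Bform f X.character = 0 := h0 _ hchar
    have hsum : ∑ x : H, f x * X.character x⁻¹ = 0 := by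
      unfold Bform at hB
      rcases mul_eq_zero.1 hB with h | h
      · exact absurd h (inv_ne_zero card_ne_zero')
      · exact h
    have hTsum : T = ∑ x : H, f x • ((subRepS S) x⁻¹) := by
      apply LinearMap.ext; intro t
      rw [LinearMap.sum_apply]
      show cfElt f • t = _
      unfold cfElt
      rw [Finset.sum_smul]
      apply Finset.sum_congr rfl
      intro x _
      rw [LinearMap.smul_apply, subRepS_apply, ← smul_assoc]
      congr 1
      rw [smul_single', mul_one]
    have htr1 : LinearMap.trace ℂ ↥S T = ∑ x : H, f x * X.character x⁻¹ := by
      rw [hTsum, map_sum]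
      apply Finset.sum_congr rfl
      intro x _
      rw [map_smul]
      rfl
    have htr2 : LinearMap.trace ℂ ↥S T = c * (Module.finrank ℂ ↥S) := by
      have hTc : T = c • (LinearMap.id : ↥S →ₗ[ℂ] ↥S) := LinearMap.ext fun t => hT t
      rw [hTc, map_smul, LinearMap.trace_id]
      rfl
    have hc0 : c = 0 := by
      haveI : Nontrivial ↥S := IsSimpleModule.nontrivial A ↥S
      have hpos : 0 < Module.finrank ℂ ↥S := Module.finrank_pos
      have hne : ((Module.finrank ℂ ↥S : ℂ)) ≠ 0 := by
        exact_mod_cast Nat.pos_iff_ne_zero.1 hpos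
      have hcc := htr2.symm.trans htr1
      rw [hsum] at hcc
      rcases mul_eq_zero.1 hcc with h | h
      · exact h
      · exact absurd h hne
    have := hT ⟨s, hs⟩
    rw [hc0, zero_smul] at this
    have hcoe := congrArg (Subtype.val) this
    simpa using hcoe
  -- semisimplicity
  haveI : NeZero ((Fintype.card H : ℂ)) := ⟨card_ne_zero'⟩
  have hsup : (sSup {m : Submodule A A | IsSimpleModule A ↥m}) = ⊤ :=
    IsSemisimpleModule.sSup_simples_eq_top A A
  have h1 : (1 : A) ∈ sSup {m : Submodule A A | IsSimpleModule A ↥m} := by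
    rw [hsup]; trivial
  rw [sSup_eq_iSup'] at h1
  have hC : cfElt f * 1 = 0 := by
    refine Submodule.iSup_induction _ (motive := fun x => cfElt f * x = 0) h1 ?_ (mul_zero _) ?_
    · intro i x hx
      exact hann i.val i.2 x hx
    · intro x y hx hy
      rw [mul_add, hx, hy, add_zero]
  have hcf : cfElt f = 0 := by rwa [mul_one] at hC
  funext y
  have heval : (cfElt f).coeff y⁻¹ = f y := by
    unfold cfElt
    rw [MonoidAlgebra.coeff_sum, Finsupp.finset_sum_apply]
    rw [Finset.sum_eq_single y]
    · rw [MonoidAlgebra.coeff_single, Finsupp.single_apply, if_pos rfl]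
    · intro x _ hxy
      rw [MonoidAlgebra.coeff_single, Finsupp.single_apply, if_neg (fun h => hxy (inv_injective h))]
    · intro h; exact absurd (Finset.mem_univ y) h
  rw [hcf] at heval
  exact heval.symm ▸ rfl

instance : Fintype ↑(GrpCat.of H) := ‹Fintype H›
instance : Invertible ((Fintype.card ↑(GrpCat.of H) : ℂ)) :=
  invertibleOfNonzero (by exact_mod_cast Nat.cast_ne_zero.2 Fintype.card_ne_zero)

lemma Bform_char (V W : FDRep ℂ H) [Simple V] [Simple W] :
    Bform V.character W.character = if Nonempty (V ≅ W) then 1 else 0 := by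
  have h := FDRep.char_orthonormal (k := ℂ) (G := H) V W
  rw [Nat.card_eq_fintype_card] at h
  calc Bform V.character W.character
      = (Fintype.card H : ℂ)⁻¹ * ∑ g : H, V.character g * W.character g⁻¹ := rfl
    _ = _ := h

lemma Bform_self {χ : H → ℂ} (h : IsIrrChar H χ) : Bform χ χ = 1 := by
  obtain ⟨V, hV, rfl⟩ := h
  haveI := hV
  rw [Bform_char V V, if_pos ⟨Iso.refl V⟩]

lemma Bform_ne {χ ψ : H → ℂ} (hχ : IsIrrChar H χ) (hψ : IsIrrChar H ψ) (hne : χ ≠ ψ) :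
    Bform χ ψ = 0 := by
  obtain ⟨V, hV, rfl⟩ := hχ
  obtain ⟨W, hW, rfl⟩ := hψ
  haveI := hV; haveI := hW
  rw [Bform_char V W, if_neg]
  rintro ⟨i⟩
  exact hne (FDRep.char_iso i)

/-- Bform as a linear map in the first argument -/
def BformL (v : H → ℂ) : (H → ℂ) →ₗ[ℂ] ℂ where
  toFun u := Bform u v
  map_add' a b := by
    show (Fintype.card H : ℂ)⁻¹ * ∑ x, (a x + b x) * v x⁻¹ =
      (Fintype.card H : ℂ)⁻¹ * ∑ x, a x * v x⁻¹ + (Fintype.card H : ℂ)⁻¹ * ∑ x, b x * v x⁻¹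
    rw [← mul_add, ← Finset.sum_add_distrib]
    congr 1
    exact Finset.sum_congr rfl fun x _ => by ring
  map_smul' c a := by
    show (Fintype.card H : ℂ)⁻¹ * ∑ x, (c * a x) * v x⁻¹ =
      c * ((Fintype.card H : ℂ)⁻¹ * ∑ x, a x * v x⁻¹)
    rw [Finset.mul_sum, Finset.mul_sum, Finset.mul_sum]
    exact Finset.sum_congr rfl fun x _ => by ring

lemma BformL_apply (u v : H → ℂ) : BformL v u = Bform u v := rfl

lemma irr_finite : {χ : H → ℂ | IsIrrChar H χ}.Finite := by
  apply LinearIndependent.setFinite (R := ℂ)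
  rw [linearIndependent_iff']
  intro s g hsum i hi
  have happ := congrArg (BformL ((i : H → ℂ))) hsum
  rw [map_sum, map_zero] at happ
  rw [Finset.sum_eq_single i] at happ
  · rw [map_smul, BformL_apply, Bform_self i.2] at happ
    simpa using happ
  · intro j _ hji
    rw [map_smul, BformL_apply, Bform_ne j.2 i.2 (fun h => hji (Subtype.ext h))]
    simp
  · intro h; exact absurd hi h

end GeneralH

section PartII2
variable {G : Type} [Group G] [Fintype G] (N : Subgroup G) [hn : N.Normal]

def conjAut (g : G) : ↥N →* ↥N where
  toFun x := ⟨g * ↑x * g⁻¹, hn.conj_mem _ x.2 g⟩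
  map_one' := Subtype.ext (by simp)
  map_mul' x y := Subtype.ext (by push_cast; group)

lemma conjAut_coe (g : G) (x : ↥N) : (conjAut N g x : G) = g * ↑x * g⁻¹ := rfl

lemma conjAut_inv_apply (g : G) (x : ↥N) : conjAut N g (conjAut N g⁻¹ x) = x :=
  Subtype.ext (by rw [conjAut_coe, conjAut_coe]; group)

lemma conjAut_bijective (g : G) : Function.Bijective (conjAut N g) := by
  constructor
  · intro a b hab
    have := congrArg (conjAut N g⁻¹) hab
    rwa [show conjAut N g⁻¹ (conjAut N g a) = a from Subtype.ext (by rw [conjAut_coe, conjAut_coe]; group),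
      show conjAut N g⁻¹ (conjAut N g b) = b from Subtype.ext (by rw [conjAut_coe, conjAut_coe]; group)] at this
  · intro y
    exact ⟨conjAut N g⁻¹ y, conjAut_inv_apply N g y⟩

lemma conjChar_apply' (g : G) (θ : ↥N → ℂ) (x : ↥N) :
    conjChar N g θ x = θ (conjAut N g x) := rfl

lemma isIrrChar_conj {θ : ↥N → ℂ} (h : IsIrrChar ↥N θ) (g : G) :
    IsIrrChar ↥N (conjChar N g θ) := by
  obtain ⟨V, hV, rfl⟩ := h
  refine ⟨FDRep.of (V.ρ.comp (conjAut N g)), ?_, ?_⟩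
  · rw [simple_iff_rep]
    rw [simple_iff_rep] at hV
    refine ⟨hV.1, fun W hW => ?_⟩
    apply hV.2 W
    intro a x hx
    have h3 := hW (conjAut N g⁻¹ a) x hx
    have h2 : (FDRep.of (V.ρ.comp (conjAut N g))).ρ (conjAut N g⁻¹ a) x = V.ρ a x := by
      show V.ρ (conjAut N g (conjAut N g⁻¹ a)) x = V.ρ a x
      rw [conjAut_inv_apply]
    rwa [h2] at h3
  · rfl

def setOrb (θ : ↥N → ℂ) : Set (↥N → ℂ) := {ψ | ∃ g : G, conjChar N g θ = ψ}

lemma mem_setOrb_self (θ : ↥N → ℂ) : θ ∈ setOrb N θ := ⟨1, conjChar_one N θ⟩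

lemma setOrb_eq_of_mem {θ ψ : ↥N → ℂ} (h : ψ ∈ setOrb N θ) : setOrb N ψ = setOrb N θ := by
  obtain ⟨g, rfl⟩ := h
  ext φ
  constructor
  · rintro ⟨g', rfl⟩
    exact ⟨g * g', (conjChar_comp N g' g θ).symm⟩
  · rintro ⟨g'', rfl⟩
    refine ⟨g⁻¹ * g'', ?_⟩
    rw [conjChar_comp, mul_inv_cancel_left]

lemma irr_of_mem_setOrb {θ ψ : ↥N → ℂ} (hθ : IsIrrChar ↥N θ) (h : ψ ∈ setOrb N θ) :
    IsIrrChar ↥N ψ := by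
  obtain ⟨g, rfl⟩ := h
  exact isIrrChar_conj N hθ g

lemma Bform_conj_inv {f : ↥N → ℂ} (hf : ∀ g : G, conjChar N g f = f) (g : G) (u : ↥N → ℂ) :
    Bform f (conjChar N g u) = Bform f u := by
  unfold Bform
  congr 1
  let e : ↥N ≃ ↥N := Equiv.ofBijective _ (conjAut_bijective N g⁻¹)
  rw [← Equiv.sum_comp e (fun x => f x * conjChar N g u x⁻¹)]
  apply Finset.sum_congr rfl
  intro y _
  show f (conjAut N g⁻¹ y) * conjChar N g u (conjAut N g⁻¹ y)⁻¹ = f y * u y⁻¹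
  congr 1
  · calc f (conjAut N g⁻¹ y) = conjChar N g⁻¹ f y := rfl
      _ = f y := by rw [hf g⁻¹]
  · rw [show (conjAut N g⁻¹ y)⁻¹ = conjAut N g⁻¹ y⁻¹ from (map_inv (conjAut N g⁻¹) y).symm]
    rw [conjChar_apply', conjAut_inv_apply]

def orbFinset (θ : ↥N → ℂ) : Finset (↥N → ℂ) :=
  (Set.finite_range (fun g : G => conjChar N g θ)).toFinset

lemma mem_orbFinset {θ ψ : ↥N → ℂ} : ψ ∈ orbFinset N θ ↔ ψ ∈ setOrb N θ := by
  rw [orbFinset, Set.Finite.mem_toFinset]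
  exact Set.mem_range

lemma hatChar_eq_sum (θ : ↥N → ℂ) : hatChar N θ = ∑ ψ ∈ orbFinset N θ, ψ := by
  funext x
  rw [Finset.sum_apply]
  rfl

lemma hatChar_mem_cfG (θ : ↥N → ℂ) : hatChar N θ ∈ cfG N := by
  show ∀ g : G, conjChar N g (hatChar N θ) = hatChar N θ
  intro g
  rw [hatChar_eq_sum]
  funext x
  rw [conjChar_apply', Finset.sum_apply, Finset.sum_apply]
  refine Finset.sum_bij' (fun ψ _ => conjChar N g ψ) (fun ψ _ => conjChar N g⁻¹ ψ) ?_ ?_ ?_ ?_ ?_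
  · intro ψ hψ
    rw [mem_orbFinset] at hψ ⊢
    obtain ⟨a, rfl⟩ := hψ
    exact ⟨a * g, (conjChar_comp N g a θ).symm⟩
  · intro ψ hψ
    rw [mem_orbFinset] at hψ ⊢
    obtain ⟨a, rfl⟩ := hψ
    exact ⟨a * g⁻¹, (conjChar_comp N g⁻¹ a θ).symm⟩
  · intro ψ _
    show conjChar N g⁻¹ (conjChar N g ψ) = ψ
    rw [conjChar_comp, mul_inv_cancel, conjChar_one]
  · intro ψ _
    show conjChar N g (conjChar N g⁻¹ ψ) = ψ
    rw [conjChar_comp, inv_mul_cancel, conjChar_one]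
  · intro ψ _
    rfl

lemma Bform_hat {θ θ' : ↥N → ℂ} (hθ : IsIrrChar ↥N θ) (hθ' : IsIrrChar ↥N θ') :
    Bform (hatChar N θ) θ' = if θ' ∈ setOrb N θ then 1 else 0 := by
  have h1 : Bform (hatChar N θ) θ' = ∑ ψ ∈ orbFinset N θ, Bform ψ θ' := by
    rw [← BformL_apply, hatChar_eq_sum, map_sum]
    rfl
  rw [h1]
  split_ifs with h
  · rw [Finset.sum_eq_single_of_mem θ' ((mem_orbFinset (N := N)).2 h)]
    · exact Bform_self hθ'
    · intro ψ hψ hne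
      exact Bform_ne (irr_of_mem_setOrb N hθ ((mem_orbFinset (N := N)).1 hψ)) hθ' hne
  · apply Finset.sum_eq_zero
    intro ψ hψ
    refine Bform_ne (irr_of_mem_setOrb N hθ ((mem_orbFinset (N := N)).1 hψ)) hθ' ?_
    intro he
    exact h (he ▸ (mem_orbFinset (N := N)).1 hψ)

end PartII2

lemma Gclass_conj {G : Type} [Group G] (g x : G) : Gclass G (g * x * g⁻¹) = Gclass G x := by
  ext y
  constructor
  · rintro ⟨a, rfl⟩
    exact ⟨a * g, by group⟩
  · rintro ⟨b, rfl⟩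
    exact ⟨b * g⁻¹, by group⟩

lemma mem_Gclass_self {G : Type} [Group G] (x : G) : x ∈ Gclass G x := ⟨1, by group⟩

theorem stmt_2 {G : Type} [Group G] [Fintype G] (N : Subgroup G) [N.Normal] :
    Nat.card {O : Set (↥N → ℂ) | ∃ θ : ↥N → ℂ, IsIrrChar ↥N θ ∧
        O = {ψ | ∃ g : G, conjChar N g θ = ψ}} =
    Nat.card {C : Set G | ∃ x ∈ N, C = Gclass G x} := by
  classical
  set Oset := {O : Set (↥N → ℂ) | ∃ θ : ↥N → ℂ, IsIrrChar ↥N θ ∧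
        O = {ψ | ∃ g : G, conjChar N g θ = ψ}} with hOset
  set Kset := {C : Set G | ∃ x ∈ N, C = Gclass G x} with hKset
  have hOfin : Oset.Finite := by
    have hsub : Oset ⊆ (setOrb N) '' {χ : ↥N → ℂ | IsIrrChar ↥N χ} := by
      rintro O ⟨θ, hθ, rfl⟩
      exact ⟨θ, hθ, rfl⟩
    exact ((irr_finite (H := ↥N)).image _).subset hsub
  have hKfin : Kset.Finite := Set.toFinite _
  letI : Fintype ↥Oset := hOfin.fintype
  letI : Fintype ↥Kset := hKfin.fintype
  -- representatives of orbits
  let θO : ↥Oset → (↥N → ℂ) := fun O => Classical.choose O.2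
  have hθO : ∀ O : ↥Oset, IsIrrChar ↥N (θO O) ∧ (O : Set (↥N → ℂ)) = setOrb N (θO O) :=
    fun O => Classical.choose_spec O.2
  -- representatives of classes
  let xC : ↥Kset → G := fun C => Classical.choose C.2
  have hxC : ∀ C : ↥Kset, xC C ∈ N ∧ (C : Set G) = Gclass G (xC C) := by
    intro C
    obtain ⟨h1, h2⟩ := Classical.choose_spec C.2
    exact ⟨h1, h2⟩
  -- E2 : cfG ≃ functions on orbits
  let E2 : ↥(cfG N) →ₗ[ℂ] (↥Oset → ℂ) :=
    { toFun := fun f O => Bform (f : ↥N → ℂ) (θO O)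
      map_add' := fun a b => funext fun O => by
        show Bform ((a : ↥N → ℂ) + (b : ↥N → ℂ)) (θO O) = Bform a (θO O) + Bform b (θO O)
        rw [← BformL_apply, map_add]
        rfl
      map_smul' := fun c a => funext fun O => by
        show Bform (c • (a : ↥N → ℂ)) (θO O) = c • Bform a (θO O)
        rw [← BformL_apply, map_smul]
        rfl }
  have hinj2 : Function.Injective E2 := by
    rw [← LinearMap.ker_eq_bot, eq_bot_iff]
    intro f hf
    have h0 : ∀ O : ↥Oset, Bform (f : ↥N → ℂ) (θO O) = 0 := fun O =>
      congrFun (LinearMap.mem_ker.1 hf) O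
    have hcf : ∀ g : G, conjChar N g (f : ↥N → ℂ) = f := f.2
    have hclass : ∀ a x : ↥N, (f : ↥N → ℂ) (a * x * a⁻¹) = (f : ↥N → ℂ) x := by
      intro a x
      have h1 := congrFun (hcf (a : G)) x
      have h2 : (a * x * a⁻¹ : ↥N) = conjAut N (a : G) x := by
        apply Subtype.ext
        rw [conjAut_coe]
        push_cast
        rfl
      rw [h2]
      exact h1
    have hBzero : ∀ χ : ↥N → ℂ, IsIrrChar ↥N χ → Bform (f : ↥N → ℂ) χ = 0 := by
      intro χ hχ
      have hOmem : setOrb N χ ∈ Oset := ⟨χ, hχ, rfl⟩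
      let O : ↥Oset := ⟨setOrb N χ, hOmem⟩
      have hmem : χ ∈ setOrb N (θO O) := by
        rw [← (hθO O).2]
        exact mem_setOrb_self N χ
      obtain ⟨g, hg⟩ := hmem
      calc Bform (f : ↥N → ℂ) χ = Bform (f : ↥N → ℂ) (conjChar N g (θO O)) := by rw [hg]
        _ = Bform (f : ↥N → ℂ) (θO O) := Bform_conj_inv N hcf g _
        _ = 0 := h0 O
    have hzero : (f : ↥N → ℂ) = 0 := completeness _ hclass hBzero
    rw [Submodule.mem_bot]
    exact Subtype.ext hzero
  have hsurj2 : Function.Surjective E2 := by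
    intro v
    refine ⟨⟨∑ O : ↥Oset, v O • hatChar N (θO O),
      Submodule.sum_mem _ fun O _ => Submodule.smul_mem _ _ (hatChar_mem_cfG N (θO O))⟩, ?_⟩
    funext O'
    show Bform (∑ O : ↥Oset, v O • hatChar N (θO O)) (θO O') = v O'
    rw [← BformL_apply, map_sum, Finset.sum_eq_single O']
    · rw [map_smul, BformL_apply, Bform_hat N (hθO O').1 (hθO O').1,
        if_pos (mem_setOrb_self N _)]
      simp
    · intro O _ hne
      rw [map_smul, BformL_apply, Bform_hat N (hθO O).1 (hθO O').1, if_neg, smul_zero]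
      intro hmem
      apply hne
      have heq := setOrb_eq_of_mem N hmem
      apply Subtype.ext
      rw [(hθO O).2, (hθO O').2, heq]
    · intro h
      exact absurd (Finset.mem_univ O') h
  -- E1 : cfG ≃ functions on classes
  let E1 : ↥(cfG N) →ₗ[ℂ] (↥Kset → ℂ) :=
    { toFun := fun f C => (f : ↥N → ℂ) ⟨xC C, (hxC C).1⟩
      map_add' := fun a b => rfl
      map_smul' := fun c a => rfl }
  have hinj1 : Function.Injective E1 := by
    rw [← LinearMap.ker_eq_bot, eq_bot_iff]
    intro f hf
    have h0 : ∀ C : ↥Kset, (f : ↥N → ℂ) ⟨xC C, (hxC C).1⟩ = 0 := fun C =>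
      congrFun (LinearMap.mem_ker.1 hf) C
    rw [Submodule.mem_bot]
    apply Subtype.ext
    funext x
    have hCmem : Gclass G (x : G) ∈ Kset := ⟨(x : G), x.2, rfl⟩
    let C : ↥Kset := ⟨Gclass G (x : G), hCmem⟩
    have hx : (x : G) ∈ Gclass G (xC C) := by
      rw [← (hxC C).2]
      exact mem_Gclass_self (x : G)
    obtain ⟨g, hg⟩ := hx
    have h1 := congrFun (f.2 g) (⟨xC C, (hxC C).1⟩ : ↥N)
    have hmemN : g * xC C * g⁻¹ ∈ N := Subgroup.Normal.conj_mem ‹N.Normal› _ (hxC C).1 g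
    have h2 : (⟨g * xC C * g⁻¹, hmemN⟩ : ↥N) = x := Subtype.ext hg
    calc (f : ↥N → ℂ) x = conjChar N g (f : ↥N → ℂ) ⟨xC C, (hxC C).1⟩ := by
          rw [show conjChar N g (f : ↥N → ℂ) ⟨xC C, (hxC C).1⟩
              = (f : ↥N → ℂ) ⟨g * xC C * g⁻¹, hmemN⟩ from rfl, h2]
      _ = (f : ↥N → ℂ) ⟨xC C, (hxC C).1⟩ := h1
      _ = 0 := h0 C
  have hsurj1 : Function.Surjective E1 := by
    intro v
    have hFmem : ∀ x : ↥N, Gclass G (x : G) ∈ Kset := fun x => ⟨(x : G), x.2, rfl⟩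
    let F : ↥N → ℂ := fun x => v ⟨Gclass G (x : G), hFmem x⟩
    have hFcf : F ∈ cfG N := by
      show ∀ g : G, conjChar N g F = F
      intro g
      funext x
      show v ⟨Gclass G ((conjAut N g x : ↥N) : G), _⟩ = v ⟨Gclass G (x : G), hFmem x⟩
      congr 1
      apply Subtype.ext
      show Gclass G ((conjAut N g x : ↥N) : G) = Gclass G (x : G)
      rw [conjAut_coe]
      exact Gclass_conj g (x : G)
    refine ⟨⟨F, hFcf⟩, ?_⟩
    funext C
    show v ⟨Gclass G (xC C), _⟩ = v C
    congr 1
    apply Subtype.ext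
    exact ((hxC C).2).symm
  have e2 := LinearEquiv.ofBijective E2 ⟨hinj2, hsurj2⟩
  have e1 := LinearEquiv.ofBijective E1 ⟨hinj1, hsurj1⟩
  rw [Nat.card_eq_fintype_card, Nat.card_eq_fintype_card]
  rw [← Module.finrank_fintype_fun_eq_card ℂ (η := ↥Oset),
    ← Module.finrank_fintype_fun_eq_card ℂ (η := ↥Kset)]
  rw [← e2.finrank_eq, ← e1.finrank_eq]
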